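/- arXiv:2605.18811 — 4 statements merged into one kernel-verified Lean document; each statement's English description precedes it below -/
import Mathlib

section
/- Every factor of length 2 of the infinite fixed point m^ω(0) consists of letters a followed by b such that b ≡ a+1 (mod 5) or b ≡ a+2 (mod 5); that is, for every position n, m^ω(0)(n+1) ≡ m^ω(0)(n) + 1 (mod 5) or m^ω(0)(n+1) ≡ m^ω(0)(n) + 2 (mod 5). -/
/-- `t` occurs at position `n` in the infinite word `w`. -/
def OccursAt {A : Type*} (t : List A) (w : ℕ → A) (n : ℕ) : Prop :=
  ∀ i, (h : i < t.length) → w (n + i) = t.get ⟨i, h⟩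

/-- `t` is a factor of the infinite word `w`. -/
def IsFactor {A : Type*} (t : List A) (w : ℕ → A) : Prop :=
  ∃ n, OccursAt t w n

/-- The common prefix of length 48 of the images of `m`. -/
def cword : List (Fin 5) := [0,2,4,1,3,0,1,2,4,0,2,3,0,1,3,0,2,4,1,3,4,1,2,4,0,2,3,4,1,3,0,2,4,1,3,4,1,2,4,0,2,3,0,1,3,0,2,4]

/-- The 95-uniform morphism `m`. -/
def m : Fin 5 → List (Fin 5) :=
  ![cword ++ [1,3,0,1,2,4,0,2,3,0,1,3,0,2,4,0,2,3,0,1,2,4,0,2,4,1,3,4,1,2,4,0,2,3,0,1,3,0,2,4,0,2,3,0,1,2,4],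
    cword ++ [0,2,3,0,1,2,4,0,2,4,1,3,0,1,2,4,0,2,3,0,1,3,0,2,4,0,2,3,4,1,2,4,0,2,4,1,3,4,1,2,4,0,2,3,0,1,3],
    cword ++ [0,2,3,4,1,2,4,0,2,4,1,3,0,1,2,4,0,2,3,4,1,3,0,2,4,1,3,0,1,2,4,0,2,3,0,1,3,0,2,4,0,2,3,0,1,2,4],
    cword ++ [1,3,0,1,2,4,0,2,3,0,1,3,0,2,4,0,2,3,0,1,2,4,0,2,4,1,3,4,1,2,4,0,2,3,0,1,3,0,2,4,0,2,3,4,1,2,4],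
    cword ++ [0,2,3,4,1,2,4,0,2,4,1,3,0,1,2,4,0,2,3,0,1,3,0,2,4,0,2,3,4,1,2,4,0,2,4,1,3,4,1,2,4,0,2,3,0,1,3]]


/-- The iterates `m^k(0)`. -/
def mIter : ℕ → List (Fin 5)
  | 0 => [0]
  | k + 1 => (mIter k).flatMap m

/-- The infinite fixed point `m^ω(0)`. Since `m(0)` starts with the letter `0`,
each `mIter k` is a prefix of `mIter (k+1)`, and `mIter (n+1)` has length
`95 ^ (n+1) > n`, so this is the limit word. -/
def mWord (n : ℕ) : Fin 5 := (mIter (n + 1)).getD n 0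

/-- The "differ by 1 or 2" relation on letters. -/
def R (a b : Fin 5) : Prop := b = a + 1 ∨ b = a + 2
instance : DecidableRel R := fun _ _ => instDecidableOr

/-- Boolean checker for `List.Chain' R` (the library instance is tactic-defined
and does not reduce under `decide`). -/
def chainB : List (Fin 5) → Bool
  | a :: b :: l => ((b == a + 1) || (b == a + 2)) && chainB (b :: l)
  | _ => true

lemma chainB_chain' : ∀ l : List (Fin 5), chainB l = true → l.Chain' R
  | [] => fun _ => List.isChain_nil
  | [_] => fun _ => List.isChain_singleton _
  | a :: b :: l => fun h => by
      simp only [chainB, Bool.and_eq_true, Bool.or_eq_true, beq_iff_eq] at h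
      exact List.isChain_cons_cons.2 ⟨h.1, chainB_chain' (b :: l) h.2⟩

lemma chain_m (a : Fin 5) : (m a).Chain' R := by
  apply chainB_chain'
  fin_cases a <;> decide

lemma head_m (a : Fin 5) : (m a).head? = some 0 := by fin_cases a <;> decide

lemma last_m (a : Fin 5) : ∀ x ∈ (m a).getLast?, R x 0 := by
  fin_cases a <;> simp_all [m, cword, R]

lemma len_m (a : Fin 5) : (m a).length = 95 := by fin_cases a <;> decide

lemma head_flatMap (l : List (Fin 5)) : l = [] ∨ (l.flatMap m).head? = some 0 := by
  cases l with
  | nil => exact Or.inl rfl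
  | cons a l =>
      right
      rw [List.flatMap_cons, List.head?_append_of_ne_nil]
      · exact head_m a
      · have hl := len_m a
        intro h
        rw [h] at hl
        simp at hl

lemma chain_flatMap (l : List (Fin 5)) : (l.flatMap m).Chain' R := by
  induction l with
  | nil => exact List.isChain_nil
  | cons a l ih =>
      rw [List.flatMap_cons, List.Chain', List.isChain_append]
      refine ⟨chain_m a, ih, ?_⟩
      intro x hx y hy
      rcases head_flatMap l with h | h
      · simp [h] at hy
      · rw [h, Option.mem_some_iff] at hy
        subst hy
        exact last_m a x hx

lemma chain_mIter (k : ℕ) : (mIter k).Chain' R := by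
  cases k with
  | zero => exact List.isChain_singleton _
  | succ k => exact chain_flatMap _

lemma len_flatMap (l : List (Fin 5)) : (l.flatMap m).length = 95 * l.length := by
  induction l with
  | nil => simp
  | cons a l ih => simp [List.flatMap_cons, ih, len_m, Nat.mul_succ, Nat.mul_add]; ring

lemma len_mIter (k : ℕ) : (mIter k).length = 95 ^ k := by
  induction k with
  | zero => rfl
  | succ k ih => rw [show mIter (k+1) = (mIter k).flatMap m from rfl, len_flatMap, ih]; ring

lemma mIter_prefix (k : ℕ) : mIter k <+: mIter (k + 1) := by
  induction k with
  | zero =>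
      refine ⟨(m 0).tail, ?_⟩
      show [(0 : Fin 5)] ++ (m 0).tail = [0].flatMap m
      simp [m, cword]
  | succ k ih =>
      obtain ⟨t, ht⟩ := ih
      refine ⟨t.flatMap m, ?_⟩
      rw [show mIter (k+2) = (mIter (k+1)).flatMap m from rfl, ← ht, List.flatMap_append]
      rw [ht]
      rfl

lemma mIter_prefix_le {j k : ℕ} (h : j ≤ k) : mIter j <+: mIter k := by
  induction k with
  | zero => cases Nat.le_zero.1 h; exact List.prefix_refl _
  | succ k ih =>
      rcases Nat.lt_or_ge j (k+1) with h' | h'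
      · exact (ih (Nat.lt_succ_iff.1 h')).trans (mIter_prefix k)
      · cases Nat.le_antisymm h h'; exact List.prefix_refl _

lemma lt_len (n k : ℕ) (h : n < k) : n < (mIter k).length := by
  rw [len_mIter]
  calc n < k := h
    _ ≤ 95 ^ k := Nat.le_of_lt (Nat.lt_pow_self (by norm_num))

lemma mWord_eq (n k : ℕ) (h : n < k) : mWord n = (mIter k)[n]'(lt_len n k h) := by
  have h1 : n < (mIter (n+1)).length := lt_len n (n+1) (Nat.lt_succ_self n)
  have hp : mIter (n+1) <+: mIter k := by
    rcases Nat.lt_or_ge (n+1) k with h' | h'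
    · exact mIter_prefix_le (Nat.le_of_lt h')
    · cases Nat.le_antisymm h h'; exact List.prefix_refl _
  rw [mWord, List.getD_eq_getElem _ _ h1]
  exact hp.getElem h1

/-- Consecutive letters of `m^ω(0)` differ by `1` or `2` modulo 5. -/
theorem mWord_succ_letter (n : ℕ) :
    mWord (n + 1) = mWord n + 1 ∨ mWord (n + 1) = mWord n + 2 := by
  have h1 : n < n + 2 := by omega
  have h2 : n + 1 < n + 2 := by omega
  rw [mWord_eq n (n+2) h1, mWord_eq (n+1) (n+2) h2]
  have hchain := List.isChain_iff_getElem.1 (chain_mIter (n+2))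
  have hlen : n < (mIter (n+2)).length - 1 := by
    have := lt_len (n+1) (n+2) h2; omega
  rcases hchain n (by omega) with h | h
  · exact Or.inl h
  · exact Or.inr h
end

section
/- Every factor of length at least 8 of the infinite word f₃(m^ω(0)) contains the factor 20 (the letter 2 immediately followed by the letter 0). -/
/-- The 7-uniform morphism `f₃` to a ternary alphabet. -/
def f3 : Fin 5 → List (Fin 3) :=
  ![[0,0,0,1,0,2,2], [0,1,0,2,1,2,2], [0,2,1,1,1,2,2], [0,2,1,0,1,1,2], [0,0,0,2,1,2,2]]


/-- The image of `m^ω(0)` under `f₃`, applied letterwise. -/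
def f3Word (n : ℕ) : Fin 3 := (f3 (mWord (n / 7))).getD (n % 7) 0

/-- Every factor of `f₃(m^ω(0))` of length at least 8 contains the factor `20`. -/
theorem f3Word_long_factor_contains_20 (t : List (Fin 3))
    (ht : 8 ≤ t.length) (h : IsFactor t f3Word) :
    [2, 0] <:+: t := by
  obtain ⟨n, hn⟩ := h
  set j : ℕ := (13 - n % 7) % 7 with hjdef
  have hj7 : j < 7 := Nat.mod_lt _ (by norm_num)
  have hmod6 : (n + j) % 7 = 6 := by omega
  have hmod0 : (n + j + 1) % 7 = 0 := by omega
  have h2 : f3Word (n + j) = 2 := by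
    unfold f3Word
    rw [hmod6]
    generalize mWord ((n + j) / 7) = a
    fin_cases a <;> rfl
  have h0 : f3Word (n + j + 1) = 0 := by
    unfold f3Word
    rw [hmod0]
    generalize mWord ((n + j + 1) / 7) = a
    fin_cases a <;> rfl
  have hjlt : j < t.length := by omega
  have hj1lt : j + 1 < t.length := by omega
  have ht2 : t.get ⟨j, hjlt⟩ = 2 := by rw [← hn j hjlt]; exact h2
  have ht0 : t.get ⟨j + 1, hj1lt⟩ = 0 := by
    rw [← hn (j + 1) hj1lt, ← Nat.add_assoc]; exact h0
  refine ⟨t.take j, t.drop (j + 2), ?_⟩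
  have e1 : t.drop j = t.get ⟨j, hjlt⟩ :: t.drop (j + 1) :=
    (List.getElem_cons_drop hjlt).symm
  have e2 : t.drop (j + 1) = t.get ⟨j + 1, hj1lt⟩ :: t.drop (j + 2) :=
    (List.getElem_cons_drop hj1lt).symm
  rw [ht2] at e1
  rw [ht0] at e2
  calc t.take j ++ [2, 0] ++ t.drop (j + 2)
      = t.take j ++ (2 :: 0 :: t.drop (j + 2)) := by simp
    _ = t.take j ++ t.drop j := by rw [e1, e2]
    _ = t := List.take_append_drop _ _
end

section
/- The word 20 occurs in the infinite word f₃(m^ω(0)) only at positions congruent to 6 modulo 7; that is, the occurrences of 20 exactly overlap the boundaries between consecutive f₃-images of letters. -/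
/-- The word `20` occurs in `f₃(m^ω(0))` only at positions congruent to 6
modulo 7, i.e. overlapping the boundary between two consecutive `f₃`-images. -/
theorem f3Word_occurrences_20 (n : ℕ) (h : OccursAt [2, 0] f3Word n) :
    n % 7 = 6 := by
  have h2 := h 0 (by norm_num)
  have h0 := h 1 (by norm_num)
  simp only [List.get] at h2 h0
  by_contra hne
  have hr : n % 7 < 6 := by omega
  have hq : (n + 1) / 7 = n / 7 := by omega
  have hm : (n + 1) % 7 = n % 7 + 1 := by omega
  rw [show n + 0 = n from rfl] at h2
  unfold f3Word at h2 h0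
  rw [hq, hm] at h0
  have key : ∀ a : Fin 5, ∀ r : Fin 6,
      ¬((f3 a).getD (r : ℕ) 0 = 2 ∧ (f3 a).getD ((r : ℕ) + 1) 0 = 0) := by decide
  exact key (mWord (n / 7)) ⟨n % 7, hr⟩ ⟨h2, h0⟩
end

section
/- Any two occurrences in f₃(m^ω(0)) of a common factor of length at least 8 start at positions that are congruent modulo 7; that is, if a finite word t with |t| ≥ 8 occurs in f₃(m^ω(0)) at positions n and n', then n ≡ n' (mod 7). -/
def win (a b : Fin 5) (r : ℕ) (i : ℕ) : Fin 3 :=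
  if r + i < 7 then (f3 a).getD (r+i) 0 else (f3 b).getD (r+i-7) 0

lemma f3Word_eq (q c : ℕ) (hc : c < 14) :
    f3Word (7*q + c) =
      if c < 7 then (f3 (mWord q)).getD c 0 else (f3 (mWord (q+1))).getD ((7*q+c) % 7) 0 := by
  unfold f3Word
  by_cases h : c < 7
  · have h1 : (7*q+c)/7 = q := by omega
    have h2 : (7*q+c)%7 = c := by omega
    rw [h1, h2, if_pos h]
  · simp only [if_neg h]
    have hq : (7*q+c)/7 = q+1 := by omega
    rw [hq]

lemma elem (q r i : ℕ) (hr : r < 7) (hi : i < 8) :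
    f3Word (7*q + r + i) = win (mWord q) (mWord (q+1)) r i := by
  have h := f3Word_eq q (r+i) (by omega)
  rw [← Nat.add_assoc] at h
  rw [h]
  unfold win
  by_cases h2 : r + i < 7
  · rw [if_pos h2, if_pos h2]
  · rw [if_neg h2, if_neg h2]
    congr 1
    omega

set_option maxHeartbeats 4000000 in
lemma key : ∀ (a b a' b' : Fin 5) (r r' : Fin 7),
    (∀ i : Fin 8, win a b r i = win a' b' r' i) → (r : ℕ) = (r' : ℕ) := by decide

/-- Two occurrences in `f₃(m^ω(0))` of a common factor of length at least 8
start at positions congruent modulo 7. -/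
theorem f3Word_long_factor_positions (t : List (Fin 3)) (n n' : ℕ)
    (ht : 8 ≤ t.length) (h : OccursAt t f3Word n) (h' : OccursAt t f3Word n') :
    n % 7 = n' % 7 := by
  have key' := key (mWord (n/7)) (mWord (n/7+1)) (mWord (n'/7)) (mWord (n'/7+1))
    ⟨n % 7, Nat.mod_lt _ (by norm_num)⟩ ⟨n' % 7, Nat.mod_lt _ (by norm_num)⟩
  apply key'
  intro i
  have e1 := elem (n/7) (n%7) i (Nat.mod_lt _ (by norm_num)) i.isLt
  have e2 := elem (n'/7) (n'%7) i (Nat.mod_lt _ (by norm_num)) i.isLt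
  have hn : 7 * (n/7) + n % 7 = n := by omega
  have hn' : 7 * (n'/7) + n' % 7 = n' := by omega
  rw [hn] at e1
  rw [hn'] at e2
  have hi : (i : ℕ) < t.length := by have := i.isLt; omega
  have := h i hi
  have := h' i hi
  simp only [Fin.val] at *
  rw [← e1, ← e2, h i hi, h' i hi]
end
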